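/- Let H be an idempotent syntactic homomorphism on KAT terms, E_H as above, E a set of equational hypotheses, H(E) = {H(r) = H(r') : (r = r') ∈ E}. Then for any terms s, t and any KAT K: K satisfies (E ∧ E_H) → s = t under all interpretations iff K satisfies H(E) → H(s) = H(t) under all interpretations. -/
import Mathlib


open Computability

/-- A Kleene algebra with tests: tests form a Boolean subalgebra of elements below 1. -/
class KAT (K : Type*) extends KleeneAlgebra K where
  isTest : K → Prop
  compl : K → K
  isTest_le_one : ∀ b, isTest b → b ≤ 1
  isTest_zero : isTest 0
  isTest_one : isTest 1
  isTest_add : ∀ b c, isTest b → isTest c → isTest (b + c)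
  isTest_mul : ∀ b c, isTest b → isTest c → isTest (b * c)
  isTest_compl : ∀ b, isTest b → isTest (compl b)
  mul_compl : ∀ b, isTest b → b * compl b = 0
  compl_mul : ∀ b, isTest b → compl b * b = 0
  add_compl : ∀ b, isTest b → b + compl b = 1

/-- Boolean terms over `m` atomic tests. -/
inductive BExp (m : ℕ) : Type
  | atom : Fin m → BExp m
  | zero : BExp m
  | one : BExp m
  | add : BExp m → BExp m → BExp m
  | mul : BExp m → BExp m → BExp m
  | compl : BExp m → BExp m

/-- KAT terms over `n` atomic programs and `m` atomic tests. -/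
inductive KTerm (n m : ℕ) : Type
  | prog : Fin n → KTerm n m
  | test : BExp m → KTerm n m
  | zero : KTerm n m
  | one : KTerm n m
  | add : KTerm n m → KTerm n m → KTerm n m
  | mul : KTerm n m → KTerm n m → KTerm n m
  | star : KTerm n m → KTerm n m

/-- Evaluation of Boolean terms. -/
def BExp.eval {m : ℕ} {K : Type*} [KAT K] (Ib : Fin m → K) : BExp m → K
  | .atom j => Ib j
  | .zero => 0
  | .one => 1
  | .add b c => b.eval Ib + c.eval Ib
  | .mul b c => b.eval Ib * c.eval Ib
  | .compl b => KAT.compl (b.eval Ib)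

/-- Evaluation of KAT terms. -/
def KTerm.eval {n m : ℕ} {K : Type*} [KAT K] (Ip : Fin n → K) (Ib : Fin m → K) :
    KTerm n m → K
  | .prog i => Ip i
  | .test b => b.eval Ib
  | .zero => 0
  | .one => 1
  | .add s t => s.eval Ip Ib + t.eval Ip Ib
  | .mul s t => s.eval Ip Ib * t.eval Ip Ib
  | .star s => (s.eval Ip Ib)∗

/-- A valid interpretation sends atomic tests to tests. -/
def ValidInterp {m : ℕ} (K : Type*) [KAT K] (Ib : Fin m → K) : Prop :=
  ∀ j, KAT.isTest (Ib j)

/-- `H` (with Boolean part `Hb`) is a syntactic homomorphism: for every interpretation `I`,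
`I ∘ H` is again an interpretation, i.e. `H` is homomorphic up to KAT-provable equality
and maps Boolean terms to Boolean terms. -/
def IsSynHom {n m : ℕ} (H : KTerm n m → KTerm n m) (Hb : BExp m → BExp m) : Prop :=
  (∀ b : BExp m, H (.test b) = .test (Hb b)) ∧
  ∀ (K : Type) (_ : KAT K) (Ip : Fin n → K) (Ib : Fin m → K), ValidInterp K Ib →
    ((H .zero).eval Ip Ib = 0) ∧
    ((H .one).eval Ip Ib = 1) ∧
    (∀ s t : KTerm n m, (H (s.add t)).eval Ip Ib = (H s).eval Ip Ib + (H t).eval Ip Ib) ∧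
    (∀ s t : KTerm n m, (H (s.mul t)).eval Ip Ib = (H s).eval Ip Ib * (H t).eval Ip Ib) ∧
    (∀ s : KTerm n m, (H s.star).eval Ip Ib = ((H s).eval Ip Ib)∗) ∧
    (∀ b : BExp m, KAT.isTest ((Hb b).eval Ib)) ∧
    ((Hb .zero).eval Ib = 0) ∧
    ((Hb .one).eval Ib = 1) ∧
    (∀ b c : BExp m, (Hb (b.add c)).eval Ib = (Hb b).eval Ib + (Hb c).eval Ib) ∧
    (∀ b c : BExp m, (Hb (b.mul c)).eval Ib = (Hb b).eval Ib * (Hb c).eval Ib) ∧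
    (∀ b : BExp m, (Hb b.compl).eval Ib = KAT.compl ((Hb b).eval Ib))

/-- `H` is idempotent: `KAT ⊨ H(r) = H(H(r))` for all terms `r`. -/
def IsIdem {n m : ℕ} (H : KTerm n m → KTerm n m) (Hb : BExp m → BExp m) : Prop :=
  ∀ (K : Type) (_ : KAT K) (Ip : Fin n → K) (Ib : Fin m → K), ValidInterp K Ib →
    (∀ r : KTerm n m, (H (H r)).eval Ip Ib = (H r).eval Ip Ib) ∧
    (∀ b : BExp m, (Hb (Hb b)).eval Ib = (Hb b).eval Ib)

/-- The hypotheses `E_H`: each atomic program `p` satisfies `p = H(p)`, and each atomic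
test `b` satisfies `b = H(b)`, under interpretation `(Ip, Ib)`. -/
def SatEH {n m : ℕ} {K : Type*} [KAT K] (H : KTerm n m → KTerm n m) (Hb : BExp m → BExp m)
    (Ip : Fin n → K) (Ib : Fin m → K) : Prop :=
  (∀ i : Fin n, Ip i = (H (.prog i)).eval Ip Ib) ∧
  (∀ j : Fin m, Ib j = (Hb (.atom j)).eval Ib)

theorem synhom_hypothesis_elimination {n m : ℕ}
    (H : KTerm n m → KTerm n m) (Hb : BExp m → BExp m)
    (hH : IsSynHom H Hb) (hI : IsIdem H Hb)
    (E : Set (KTerm n m × KTerm n m)) (s t : KTerm n m)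
    (K : Type) (inst : KAT K) :
    (∀ (Ip : Fin n → K) (Ib : Fin m → K), ValidInterp K Ib →
      (∀ e ∈ E, (e.1).eval Ip Ib = (e.2).eval Ip Ib) → SatEH H Hb Ip Ib →
      s.eval Ip Ib = t.eval Ip Ib) ↔
    (∀ (Ip : Fin n → K) (Ib : Fin m → K), ValidInterp K Ib →
      (∀ e ∈ E, (H e.1).eval Ip Ib = (H e.2).eval Ip Ib) →
      (H s).eval Ip Ib = (H t).eval Ip Ib) := by
  obtain ⟨htest, hhom⟩ := hH
  constructor
  · intro hL Ip Ib hval hE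
    obtain ⟨hz, ho, hadd, hmul, hstar, hbtest, hbz, hbo, hbadd, hbmul, hbc⟩ :=
      hhom K inst Ip Ib hval
    set Ip' : Fin n → K := fun i => (H (.prog i)).eval Ip Ib with hIp'
    set Ib' : Fin m → K := fun j => (Hb (.atom j)).eval Ib with hIb'
    have hval' : ValidInterp K Ib' := fun j => hbtest _
    have hB : ∀ b : BExp m, b.eval Ib' = (Hb b).eval Ib := by
      intro b
      induction b with
      | atom j => rfl
      | zero => simp [BExp.eval, hbz]
      | one => simp [BExp.eval, hbo]
      | add b c ihb ihc => simp [BExp.eval, hbadd, ihb, ihc]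
      | mul b c ihb ihc => simp [BExp.eval, hbmul, ihb, ihc]
      | compl b ihb => simp [BExp.eval, hbc, ihb]
    have hT : ∀ r : KTerm n m, r.eval Ip' Ib' = (H r).eval Ip Ib := by
      intro r
      induction r with
      | prog i => rfl
      | test b => simp [KTerm.eval, htest, hB]
      | zero => simp [KTerm.eval, hz]
      | one => simp [KTerm.eval, ho]
      | add a b iha ihb => simp [KTerm.eval, hadd, iha, ihb]
      | mul a b iha ihb => simp [KTerm.eval, hmul, iha, ihb]
      | star a iha => simp [KTerm.eval, hstar, iha]
    obtain ⟨hid, hidb⟩ := hI K inst Ip Ib hval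
    have hEH : SatEH H Hb Ip' Ib' := by
      constructor
      · intro i
        show Ip' i = (H (.prog i)).eval Ip' Ib'
        rw [hT]
        exact (hid _).symm
      · intro j
        show Ib' j = (Hb (.atom j)).eval Ib'
        rw [hB]
        exact (hidb _).symm
    have hE' : ∀ e ∈ E, (e.1).eval Ip' Ib' = (e.2).eval Ip' Ib' := by
      intro e he
      rw [hT, hT]
      exact hE e he
    have := hL Ip' Ib' hval' hE' hEH
    rwa [hT, hT] at this
  · intro hR Ip Ib hval hE hEH
    obtain ⟨hz, ho, hadd, hmul, hstar, hbtest, hbz, hbo, hbadd, hbmul, hbc⟩ :=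
      hhom K inst Ip Ib hval
    have hB : ∀ b : BExp m, b.eval Ib = (Hb b).eval Ib := by
      intro b
      induction b with
      | atom j => exact hEH.2 j
      | zero => simp [BExp.eval, hbz]
      | one => simp [BExp.eval, hbo]
      | add b c ihb ihc => simp [BExp.eval, hbadd, ihb, ihc]
      | mul b c ihb ihc => simp [BExp.eval, hbmul, ihb, ihc]
      | compl b ihb => simp [BExp.eval, hbc, ihb]
    have hT : ∀ r : KTerm n m, r.eval Ip Ib = (H r).eval Ip Ib := by
      intro r
      induction r with
      | prog i => exact hEH.1 i
      | test b => rw [htest]; exact hB b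
      | zero => simp [KTerm.eval, hz]
      | one => simp [KTerm.eval, ho]
      | add a b iha ihb => simp [KTerm.eval, hadd, iha, ihb]
      | mul a b iha ihb => simp [KTerm.eval, hmul, iha, ihb]
      | star a iha => simp [KTerm.eval, hstar, iha]
    have hE' : ∀ e ∈ E, (H e.1).eval Ip Ib = (H e.2).eval Ip Ib := by
      intro e he
      rw [← hT, ← hT]
      exact hE e he
    rw [hT s, hT t]
    exact hR Ip Ib hval hE'
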